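/- arXiv:2510.15660 — 2 statements merged into one kernel-verified Lean document; each statement's English description precedes it below -/
import Mathlib

section
/- Let G_w be an edge-weighted graph and e = {e_1,...,e_{t-1}} a collection of edges of G that is connected when viewed as a subgraph of G, such that the induced subgraph G[e] on the closed neighborhood N[e] is bipartite, and the weight function w is trivial (identically 1) on all edges in the closed neighborhood of e. Then I(G_w)^t : (e_1 ⋯ e_{t-1}) = I( (bipartite completion of G with respect to e)_{w'} ), where w' extends w by assigning weight 1 to all new edges. -/
open MvPolynomial

/-- The edge ideal of an edge-weighted graph `G_w`. -/
noncomputable def edgeIdealW {V K : Type*} [Field K] (G : SimpleGraph V) (w : V → V → ℕ) :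
    Ideal (MvPolynomial V K) :=
  Ideal.span {p | ∃ i j, G.Adj i j ∧ p = (X i * X j) ^ w i j}

/-- The subgraph of `G` determined by a collection of edges `es` of `G`. -/
def edgesSubgraph {V : Type*} (G : SimpleGraph V) {m : ℕ} (es : Fin m → V × V)
    (h : ∀ k, G.Adj (es k).1 (es k).2) : G.Subgraph where
  verts := {v | ∃ k, (es k).1 = v ∨ (es k).2 = v}
  Adj i j := ∃ k, es k = (i, j) ∨ es k = (j, i)
  adj_sub := by
    rintro i j ⟨k, hk | hk⟩
    · have := h k; rw [hk] at this; exact this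
    · have := h k; rw [hk] at this; exact this.symm
  edge_vert := by
    rintro i j ⟨k, hk | hk⟩
    · exact ⟨k, Or.inl (by rw [hk])⟩
    · exact ⟨k, Or.inr (by rw [hk])⟩
  symm := ⟨fun i j ⟨k, hk⟩ => ⟨k, hk.elim Or.inr Or.inl⟩⟩

/-- The closed neighbourhood `N[e]` of a collection of edges `es`: all vertices lying in
some edge of `es` or adjacent to such a vertex. -/
def closedNbhd {V : Type*} (G : SimpleGraph V) {m : ℕ} (es : Fin m → V × V) : Set V :=
  {v | (∃ k, (es k).1 = v ∨ (es k).2 = v) ∨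
    ∃ u, (∃ k, (es k).1 = u ∨ (es k).2 = u) ∧ G.Adj u v}

open scoped Classical

/-!
All ideals involved are monomial, so membership in `I(G_w)^t : e₁ ⋯ e_{t-1}` is a divisibility
statement about exponent vectors. Suppose a product of `t` generators of `I(G_w)` divides
`x^d e₁ ⋯ e_{t-1}`. Either one generator avoids every vertex of `e`, and then it divides `x^d`;
or all `t` generators are edges of `G[e]`, each with one end in `U` and one in `V'`. Counting
degrees in `U` and in `V'` against the `t - 1` edges `eₖ`, which also cross, shows that `x^d` is
divisible by some `xᵢ xⱼ` with `i ∈ U`, `j ∈ V'`, a generator of the completion.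

Conversely, for `i ∈ U` and `j ∈ V'` choose neighbours `a ∈ V'` of `i` and `b ∈ U` of `j` among
the vertices of `e`, and a path from `a` to `b` using edges of `e`. By bipartiteness the path has
odd length, and the product of its edges is `xₐ x_b` times a product of edges; so
`xᵢ xⱼ e₁ ⋯ e_{t-1} = (xᵢ xₐ)(x_b xⱼ) · (t - 2 edges) ∈ I(G_w)^t`, since all these edges lie in
`G[e]` and so have weight one.
-/

open scoped Pointwise

section MonomialIdeal

variable {σ R : Type*} [CommSemiring R]

theorem span_monomial_image_pow (S : Set (σ →₀ ℕ)) (n : ℕ) :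
    Ideal.span ((monomial · (1 : R)) '' S) ^ n = Ideal.span ((monomial · (1 : R)) '' (n • S)) := by
  induction n with
  | zero => simp
  | succ n ih =>
    rw [pow_succ, ih, Ideal.span_mul_span', succ_nsmul, ← Set.image2_mul, Set.image2_image_left,
      Set.image2_image_right, ← Set.image2_add, Set.image_image2]
    simp only [monomial_mul, one_mul]

theorem mem_colon_span_monomial_iff {S : Set (σ →₀ ℕ)} {p : σ →₀ ℕ} {f : MvPolynomial σ R} :
    f ∈ (Ideal.span ((monomial · (1 : R)) '' S)).colon (Ideal.span {monomial p (1 : R)}) ↔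
      ∀ d ∈ f.support, ∃ s ∈ S, s ≤ d + p := by
  have hsupp : (f * monomial p 1).support = f.support.map (addRightEmbedding p) :=
    AddMonoidAlgebra.support_coeff_mul_single f 1 (by simp) p
  rw [Ideal.mem_colon_span_singleton, mem_ideal_span_monomial_image, hsupp]
  simp

theorem X_mul_X_pow_eq_monomial (i j : σ) (n : ℕ) :
    (X i * X j : MvPolynomial σ R) ^ n =
      monomial (n • (Finsupp.single i 1 + Finsupp.single j 1)) 1 := by
  rw [X, X, monomial_mul, one_mul, monomial_pow, one_pow]

theorem Ideal.multiset_prod_map_mem_pow {ι : Type*} {I : Ideal R} {f : ι → R} {s : Multiset ι}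
    (h : ∀ x ∈ s, f x ∈ I) : (s.map f).prod ∈ I ^ Multiset.card s := by
  induction s using Multiset.induction with
  | empty => simp
  | cons a s ih =>
    rw [Multiset.map_cons, Multiset.prod_cons, Multiset.card_cons, pow_succ']
    exact Ideal.mul_mem_mul (h a (Multiset.mem_cons_self a s))
      (ih fun x hx => h x (Multiset.mem_cons_of_mem hx))

theorem exists_mem_pow_prod_map_eq_mul_of_le {ι : Type*} {I : Ideal R} {f : ι → R}
    {s E : Multiset ι} (hsE : s ≤ E) (hE : ∀ x ∈ E, f x ∈ I) :
    ∃ r ∈ I ^ (Multiset.card E - Multiset.card s), (E.map f).prod = (s.map f).prod * r := by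
  obtain ⟨c, rfl⟩ := Multiset.le_iff_exists_add.1 hsE
  refine ⟨(c.map f).prod, ?_, by rw [Multiset.map_add, Multiset.prod_add]⟩
  rw [Multiset.card_add, Nat.add_sub_cancel_left]
  exact Ideal.multiset_prod_map_mem_pow fun x hx => hE x (Multiset.mem_add.2 (Or.inr hx))

end MonomialIdeal

section Counting

variable {V : Type*}

def crossExponents (U V' : Set V) : Set (V →₀ ℕ) :=
  {e | ∃ i ∈ U, ∃ j ∈ V', e = Finsupp.single i 1 + Finsupp.single j 1}

noncomputable def degreeIn (A : Set V) : (V →₀ ℕ) →+ ℕ :=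
  Finsupp.degree.comp (Finsupp.filterAddHom (· ∈ A))

theorem degreeIn_apply (A : Set V) (x : V →₀ ℕ) :
    degreeIn A x = (x.filter (· ∈ A)).degree := rfl

theorem degreeIn_single (A : Set V) (v : V) :
    degreeIn A (Finsupp.single v 1) = if v ∈ A then 1 else 0 := by
  by_cases hv : v ∈ A
  · rw [degreeIn_apply, Finsupp.filter_single_of_pos _ hv, Finsupp.degree_single, if_pos hv]
  · rw [degreeIn_apply, Finsupp.filter_single_of_neg _ hv, map_zero, if_neg hv]

theorem degreeIn_mono (A : Set V) : Monotone (degreeIn A) := by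
  intro x y hxy
  obtain ⟨z, rfl⟩ := le_iff_exists_add.1 hxy
  rw [map_add]
  exact Nat.le_add_right _ _

theorem exists_mem_pos_of_degreeIn_pos {A : Set V} {d : V →₀ ℕ} (h : 0 < degreeIn A d) :
    ∃ v ∈ A, 0 < d v := by
  rw [degreeIn_apply, pos_iff_ne_zero, Ne, Finsupp.degree_eq_zero_iff] at h
  obtain ⟨v, hv⟩ := Finsupp.ne_iff.1 h
  rw [Finsupp.filter_apply, Finsupp.coe_zero, Pi.zero_apply] at hv
  split_ifs at hv with hvA
  · exact ⟨v, hvA, Nat.pos_of_ne_zero hv⟩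
  · exact absurd rfl hv

theorem degreeIn_of_mem_crossExponents {U V' : Set V} (hUV : Disjoint U V') {e : V →₀ ℕ}
    (he : e ∈ crossExponents U V') : degreeIn U e = 1 ∧ degreeIn V' e = 1 := by
  obtain ⟨i, hi, j, hj, rfl⟩ := he
  simp [degreeIn_single, hi, hj, hUV.notMem_of_mem_left hi, hUV.notMem_of_mem_right hj]

theorem Finsupp.single_add_single_le {i j : V} (hij : i ≠ j) {d : V →₀ ℕ} (hi : 0 < d i)
    (hj : 0 < d j) :
    Finsupp.single i 1 + Finsupp.single j 1 ≤ d := by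
  intro v
  rw [Finsupp.add_apply, Finsupp.single_apply, Finsupp.single_apply]
  split_ifs with hiv hjv <;> subst_vars <;> first | omega | exact absurd rfl hij

theorem exists_crossExponents_le {U V' : Set V} (hUV : Disjoint U V') {ι κ : Type*}
    [Fintype ι] [Fintype κ] (hcard : Fintype.card κ < Fintype.card ι)
    {f : ι → V →₀ ℕ} (hf : ∀ k, f k ∈ crossExponents U V')
    {g : κ → V →₀ ℕ} (hg : ∀ k, g k ∈ crossExponents U V') {d : V →₀ ℕ}
    (hle : ∑ k, f k ≤ d + ∑ k, g k) : ∃ e ∈ crossExponents U V', e ≤ d := by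
  have hpos : ∀ A, (∀ k, degreeIn A (f k) = 1) → (∀ k, degreeIn A (g k) = 1) →
      ∃ v ∈ A, 0 < d v := by
    intro A hfA hgA
    apply exists_mem_pos_of_degreeIn_pos
    have := degreeIn_mono A hle
    simp only [map_add, map_sum, hfA, hgA, Finset.sum_const, Finset.card_univ, smul_eq_mul,
      mul_one] at this
    omega
  obtain ⟨i, hi, hdi⟩ := hpos U (fun k => (degreeIn_of_mem_crossExponents hUV (hf k)).1)
    (fun k => (degreeIn_of_mem_crossExponents hUV (hg k)).1)
  obtain ⟨j, hj, hdj⟩ := hpos V' (fun k => (degreeIn_of_mem_crossExponents hUV (hf k)).2)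
    (fun k => (degreeIn_of_mem_crossExponents hUV (hg k)).2)
  exact ⟨_, ⟨i, hi, j, hj, rfl⟩,
    Finsupp.single_add_single_le (ne_of_mem_of_not_mem hi (hUV.notMem_of_mem_right hj)) hdi hdj⟩

theorem SimpleGraph.IsBipartiteWith.single_add_single_mem_crossExponents {H : SimpleGraph V}
    {U V' : Set V} (hB : H.IsBipartiteWith U V') {i j : V} (hij : H.Adj i j) :
    Finsupp.single i 1 + Finsupp.single j 1 ∈ crossExponents U V' := by
  rcases hB.mem_of_adj hij with ⟨hi, hj⟩ | ⟨hi, hj⟩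
  · exact ⟨i, hi, j, hj, rfl⟩
  · exact ⟨j, hj, i, hi, add_comm _ _⟩

theorem Finsupp.le_of_le_add_of_apply_eq_zero {x y z : V →₀ ℕ} (h : x ≤ y + z)
    (hz : ∀ v, x v ≠ 0 → z v = 0) : x ≤ y := by
  intro v
  by_cases hx : x v = 0
  · simp [hx]
  · simpa [hz v hx] using h v

end Counting

section Walks

variable {V : Type*}

theorem SimpleGraph.IsBipartiteWith.odd_length_of_walk {G : SimpleGraph V} {s t : Set V}
    (h : G.IsBipartiteWith s t) {a b : V} (p : G.Walk a b) (ha : a ∈ t) (hb : b ∈ s) :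
    Odd p.length := by
  let c : G.Coloring Bool := SimpleGraph.Coloring.mk (fun v => decide (v ∈ s)) fun {v w} hvw => by
    rcases h.mem_of_adj hvw with ⟨hv, hw⟩ | ⟨hv, hw⟩ <;>
      simp [hv, hw, h.disjoint.notMem_of_mem_right]
  have hc : ∀ v, c v = decide (v ∈ s) := fun _ => rfl
  rw [c.odd_length_iff_not_congr, hc, hc]
  simp [hb, h.disjoint.notMem_of_mem_right ha]

noncomputable def edgeMonomial (R : Type*) [CommSemiring R] : Sym2 V → MvPolynomial V R :=
  Sym2.lift ⟨fun u v => X u * X v, fun _ _ => mul_comm _ _⟩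

@[simp]
theorem edgeMonomial_mk (R : Type*) [CommSemiring R] (u v : V) :
    edgeMonomial R s(u, v) = X u * X v := rfl

/-- Along `a = v₀, v₁, …, v₂ᵣ₊₁ = b`, the product of the edges is `xₐ x_b` times the squares
of the edges `v₁v₂, v₃v₄, …, v₂ᵣ₋₁v₂ᵣ`. -/
theorem SimpleGraph.Walk.exists_prod_edges_eq_X_mul_X_mul {R : Type*} [CommSemiring R]
    {H : SimpleGraph V} {I : Ideal (MvPolynomial V R)} :
    ∀ {a b : V} (p : H.Walk a b), Odd p.length → (∀ e ∈ p.edges, edgeMonomial R e ∈ I) →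
      ∃ q ∈ I ^ (p.length - 1), (p.edges.map (edgeMonomial R)).prod = X a * X b * q
  | _, _, .nil, hodd, _ => absurd hodd (by simp)
  | _, _, .cons _ .nil, _, _ => ⟨1, by simp, by simp⟩
  | _, _, .cons (v := c) _ (.cons (v := c') _ p), hodd, hI => by
    have hp : Odd p.length := by
      simpa [Nat.odd_add_one, parity_simps] using hodd
    obtain ⟨q, hq, hprod⟩ :=
      p.exists_prod_edges_eq_X_mul_X_mul hp fun e he => hI e (by simp [he])
    have hcc' : X c * X c' ∈ I := hI s(c, c') (by simp)
    refine ⟨(X c * X c') ^ 2 * q, ?_, ?_⟩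
    · rw [SimpleGraph.Walk.length_cons, SimpleGraph.Walk.length_cons,
        show p.length + 1 + 1 - 1 = 2 + (p.length - 1) by have := hp.pos; omega, pow_add]
      exact Ideal.mul_mem_mul (Ideal.pow_mem_pow hcc' 2) hq
    · simp only [SimpleGraph.Walk.edges_cons, List.map_cons, List.prod_cons, edgeMonomial_mk,
        hprod]
      ring

end Walks

section EdgeIdeal

variable {V K : Type*} [Field K]

def edgeExponents (G : SimpleGraph V) (w : V → V → ℕ) : Set (V →₀ ℕ) :=
  {e | ∃ i j, G.Adj i j ∧ e = w i j • (Finsupp.single i 1 + Finsupp.single j 1)}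

theorem edgeIdealW_eq_span_monomial (G : SimpleGraph V) (w : V → V → ℕ) :
    edgeIdealW (K := K) G w = Ideal.span ((monomial · 1) '' edgeExponents G w) := by
  rw [edgeIdealW]
  congr 1
  ext p
  simp only [edgeExponents, Set.mem_image, Set.mem_ofPred_eq, X_mul_X_pow_eq_monomial]
  constructor
  · rintro ⟨i, j, hij, rfl⟩
    exact ⟨_, ⟨i, j, hij, rfl⟩, rfl⟩
  · rintro ⟨_, ⟨i, j, hij, rfl⟩, rfl⟩
    exact ⟨i, j, hij, rfl⟩

theorem X_mul_X_mem_edgeIdealW {G : SimpleGraph V} {w : V → V → ℕ} {i j : V} (hij : G.Adj i j)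
    (hw : w i j = 1) : X i * X j ∈ edgeIdealW (K := K) G w :=
  Ideal.subset_span ⟨i, j, hij, by rw [hw, pow_one]⟩

theorem prod_X_mul_X_eq_monomial {m : ℕ} (es : Fin m → V × V) :
    ∏ k, (X (es k).1 * X (es k).2 : MvPolynomial V K) =
      monomial (∑ k, (Finsupp.single (es k).1 1 + Finsupp.single (es k).2 1)) 1 := by
  rw [monomial_sum_one]
  refine Finset.prod_congr rfl fun k _ => ?_
  rw [X, X, monomial_mul, one_mul]

end EdgeIdeal

section ClosedNbhd

variable {V K : Type*} [Field K] {G : SimpleGraph V} {w : V → V → ℕ} {m : ℕ}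
  {es : Fin m → V × V} {U V' : Set V}

/-- The paper's `G[e]`: the subgraph of `G` induced on `N[e]`, as a graph on all of `V`. -/
def inducedOnClosedNbhd (G : SimpleGraph V) (es : Fin m → V × V) : SimpleGraph V :=
  ((⊤ : G.Subgraph).induce (closedNbhd G es)).spanningCoe

theorem le_of_notMem_crossExponents (hB : (inducedOnClosedNbhd G es).IsBipartiteWith U V')
    (htriv : ∀ i j, G.Adj i j → i ∈ closedNbhd G es → j ∈ closedNbhd G es → w i j = 1)
    {i j : V} (hij : G.Adj i j)
    (hcross : w i j • (Finsupp.single i 1 + Finsupp.single j 1) ∉ crossExponents U V')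
    {d : V →₀ ℕ} (hle : w i j • (Finsupp.single i 1 + Finsupp.single j 1) ≤
      d + ∑ k, (Finsupp.single (es k).1 1 + Finsupp.single (es k).2 1)) :
    w i j • (Finsupp.single i 1 + Finsupp.single j 1) ≤ d := by
  -- otherwise `ij` meets an edge of `e`, so it is an edge of `G[e]`, a cross edge of weight one
  have hW (v : V) (hv : v = i ∨ v = j) : ¬ ∃ l, (es l).1 = v ∨ (es l).2 = v := by
    intro hvW
    have hN : i ∈ closedNbhd G es ∧ j ∈ closedNbhd G es := by
      rcases hv with rfl | rfl
      · exact ⟨Or.inl hvW, Or.inr ⟨v, hvW, hij⟩⟩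
      · exact ⟨Or.inr ⟨v, hvW, hij.symm⟩, Or.inl hvW⟩
    rw [htriv i j hij hN.1 hN.2, one_smul] at hcross
    exact hcross (hB.single_add_single_mem_crossExponents ⟨hN.1, hN.2, hij⟩)
  refine Finsupp.le_of_le_add_of_apply_eq_zero hle fun v hv => ?_
  have hv' : v = i ∨ v = j := by
    by_contra! h
    simp [Ne.symm h.1, Ne.symm h.2] at hv
  simpa [Finsupp.finsetSum_apply, Finsupp.single_apply] using hW v hv'

theorem exists_edgeExponents_completion_le (hes : ∀ k, G.Adj (es k).1 (es k).2)
    (hUV : U ∪ V' = closedNbhd G es) (hB : (inducedOnClosedNbhd G es).IsBipartiteWith U V')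
    (htriv : ∀ i j, G.Adj i j → i ∈ closedNbhd G es → j ∈ closedNbhd G es → w i j = 1)
    {ι : Type*} [Fintype ι] (hcard : m < Fintype.card ι) {f : ι → V →₀ ℕ}
    (hf : ∀ k, f k ∈ edgeExponents G w) {d : V →₀ ℕ}
    (hle : ∑ k, f k ≤ d + ∑ k, (Finsupp.single (es k).1 1 + Finsupp.single (es k).2 1)) :
    ∃ e ∈ edgeExponents (G ⊔ SimpleGraph.fromRel fun i j => i ∈ U ∧ j ∈ V')
      (fun i j => if G.Adj i j then w i j else 1), e ≤ d := by
  by_cases hcross : ∀ k, f k ∈ crossExponents U V'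
  · have hes_cross (k : Fin m) :
        Finsupp.single (es k).1 1 + Finsupp.single (es k).2 1 ∈ crossExponents U V' :=
      hB.single_add_single_mem_crossExponents
        ⟨Or.inl ⟨k, Or.inl rfl⟩, Or.inl ⟨k, Or.inr rfl⟩, hes k⟩
    obtain ⟨_, ⟨i, hi, j, hj, rfl⟩, hled⟩ :=
      exists_crossExponents_le hB.disjoint (by simpa using hcard) hcross hes_cross hle
    refine ⟨_, ⟨i, j, Or.inr ⟨ne_of_mem_of_not_mem hi (hB.disjoint.notMem_of_mem_right hj),
      Or.inl ⟨hi, hj⟩⟩, ?_⟩, hled⟩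
    dsimp only
    split_ifs with hij
    · rw [htriv i j hij (hUV ▸ Or.inl hi) (hUV ▸ Or.inr hj), one_smul]
    · rw [one_smul]
  obtain ⟨k, hk⟩ := not_forall.1 hcross
  obtain ⟨i, j, hij, hfk⟩ := hf k
  have hfk_le : f k ≤ d + _ := (Finset.single_le_sum (by simp) (Finset.mem_univ k)).trans hle
  rw [hfk] at hk hfk_le
  exact ⟨f k, ⟨i, j, Or.inl hij, by dsimp only; rw [if_pos hij, hfk]⟩,
    hfk ▸ le_of_notMem_crossExponents hB htriv hij hk hfk_le⟩

theorem edgeSet_edgesSubgraph (hes : ∀ k, G.Adj (es k).1 (es k).2) :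
    (edgesSubgraph G es hes).edgeSet = Set.range fun k => s((es k).1, (es k).2) := by
  ext e
  induction e using Sym2.ind with
  | _ x y =>
    simp only [SimpleGraph.Subgraph.mem_edgeSet, edgesSubgraph, Set.mem_range, Sym2.eq_iff,
      Prod.ext_iff]

theorem exists_adj_mem_verts_of_mem_closedNbhd (hes : ∀ k, G.Adj (es k).1 (es k).2) {v : V}
    (hv : v ∈ closedNbhd G es) : ∃ u ∈ (edgesSubgraph G es hes).verts, G.Adj v u := by
  rcases hv with ⟨k, rfl | rfl⟩ | ⟨u, hu, huv⟩
  · exact ⟨_, ⟨k, Or.inr rfl⟩, hes k⟩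
  · exact ⟨_, ⟨k, Or.inl rfl⟩, (hes k).symm⟩
  · exact ⟨u, hu, huv.symm⟩

theorem prod_X_mul_X_eq_prod_edgeMonomial (es : Fin m → V × V) :
    ∏ k, (X (es k).1 * X (es k).2 : MvPolynomial V K) =
      ((Finset.univ.val.map fun k => s((es k).1, (es k).2)).map (edgeMonomial K)).prod := by
  rw [Multiset.map_map, Finset.prod_eq_multiset_prod]
  rfl

theorem edgeMonomial_mem_edgeIdealW (hes : ∀ k, G.Adj (es k).1 (es k).2)
    (htriv : ∀ i j, G.Adj i j → i ∈ closedNbhd G es → j ∈ closedNbhd G es → w i j = 1) :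
    ∀ e ∈ Finset.univ.val.map (fun k => s((es k).1, (es k).2)),
      edgeMonomial K e ∈ edgeIdealW (K := K) G w := by
  simp only [Multiset.mem_map, Finset.mem_val, Finset.mem_univ, true_and]
  rintro _ ⟨k, rfl⟩
  exact X_mul_X_mem_edgeIdealW (hes k)
    (htriv _ _ (hes k) (Or.inl ⟨k, Or.inl rfl⟩) (Or.inl ⟨k, Or.inr rfl⟩))

theorem prod_X_mul_X_mem_pow (hes : ∀ k, G.Adj (es k).1 (es k).2)
    (htriv : ∀ i j, G.Adj i j → i ∈ closedNbhd G es → j ∈ closedNbhd G es → w i j = 1) :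
    ∏ k, (X (es k).1 * X (es k).2 : MvPolynomial V K) ∈ edgeIdealW (K := K) G w ^ m := by
  rw [prod_X_mul_X_eq_prod_edgeMonomial]
  simpa using Ideal.multiset_prod_map_mem_pow (edgeMonomial_mem_edgeIdealW hes htriv)

theorem exists_prod_X_mul_X_eq_X_mul_X_mul (hes : ∀ k, G.Adj (es k).1 (es k).2)
    (hconn : (edgesSubgraph G es hes).Connected)
    (hB : (inducedOnClosedNbhd G es).IsBipartiteWith U V')
    (htriv : ∀ i j, G.Adj i j → i ∈ closedNbhd G es → j ∈ closedNbhd G es → w i j = 1)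
    {a b : V} (ha : a ∈ (edgesSubgraph G es hes).verts) (hb : b ∈ (edgesSubgraph G es hes).verts)
    (haV : a ∈ V') (hbU : b ∈ U) :
    ∃ q ∈ edgeIdealW (K := K) G w ^ (m - 1),
      ∏ k, (X (es k).1 * X (es k).2 : MvPolynomial V K) = X a * X b * q := by
  set H := edgesSubgraph G es hes
  set E := Finset.univ.val.map fun k => s((es k).1, (es k).2)
  obtain ⟨p⟩ : H.spanningCoe.Reachable a b :=
    (hconn ⟨a, ha⟩ ⟨b, hb⟩).map ⟨Subtype.val, fun h => h⟩
  have hHB : H.spanningCoe.IsBipartiteWith U V' :=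
    ⟨hB.disjoint, fun x y hxy => hB.mem_of_adj
      ⟨Or.inl (H.edge_vert hxy), Or.inl (H.edge_vert hxy.symm), H.adj_sub hxy⟩⟩
  have hPE : (p.bypass.edges : Multiset (Sym2 V)) ≤ E := by
    refine (Multiset.le_iff_subset
      (Multiset.coe_nodup.2 p.bypass_isPath.isTrail.edges_nodup)).2 fun e he => ?_
    have : e ∈ H.edgeSet := p.bypass.edges_subset_edgeSet he
    rw [edgeSet_edgesSubgraph] at this
    simpa [E] using this
  have hodd := hHB.odd_length_of_walk p.bypass haV hbU
  obtain ⟨q, hq, hpq⟩ := p.bypass.exists_prod_edges_eq_X_mul_X_mul hodd fun e he =>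
    edgeMonomial_mem_edgeIdealW (K := K) hes htriv e (Multiset.subset_of_le hPE he)
  obtain ⟨r, hr, hEr⟩ :=
    exists_mem_pow_prod_map_eq_mul_of_le hPE (edgeMonomial_mem_edgeIdealW (K := K) hes htriv)
  have hlen : p.bypass.length ≤ m := by simpa [E] using Multiset.card_le_card hPE
  refine ⟨q * r, ?_, by rw [prod_X_mul_X_eq_prod_edgeMonomial, hEr, Multiset.map_coe,
    Multiset.prod_coe, hpq, mul_assoc]⟩
  rw [show m - 1 = (p.bypass.length - 1) + (m - p.bypass.length) by have := hodd.pos; omega,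
    pow_add]
  exact Ideal.mul_mem_mul hq (by simpa [E] using hr)

theorem X_mul_X_mul_prod_mem_pow (hes : ∀ k, G.Adj (es k).1 (es k).2)
    (hconn : (edgesSubgraph G es hes).Connected) (hUV : U ∪ V' = closedNbhd G es)
    (hB : (inducedOnClosedNbhd G es).IsBipartiteWith U V')
    (htriv : ∀ i j, G.Adj i j → i ∈ closedNbhd G es → j ∈ closedNbhd G es → w i j = 1)
    {i j : V} (hi : i ∈ U) (hj : j ∈ V') :
    X i * X j * ∏ k, (X (es k).1 * X (es k).2 : MvPolynomial V K) ∈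
      edgeIdealW (K := K) G w ^ (m + 1) := by
  have hiN : i ∈ closedNbhd G es := hUV ▸ Or.inl hi
  have hjN : j ∈ closedNbhd G es := hUV ▸ Or.inr hj
  obtain ⟨a, ha, hia⟩ := exists_adj_mem_verts_of_mem_closedNbhd hes hiN
  obtain ⟨b, hb, hjb⟩ := exists_adj_mem_verts_of_mem_closedNbhd hes hjN
  have haN : a ∈ closedNbhd G es := Or.inl ha
  have hbN : b ∈ closedNbhd G es := Or.inl hb
  obtain ⟨q, hq, hprod⟩ := exists_prod_X_mul_X_eq_X_mul_X_mul (K := K) hes hconn hB htriv ha hb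
    (hB.mem_of_mem_adj hi ⟨hiN, haN, hia⟩) (hB.mem_of_mem_adj' hj ⟨hbN, hjN, hjb.symm⟩)
  obtain ⟨k, -⟩ := ha
  rw [hprod, show X i * X j * (X a * X b * q) = (X i * X a) * (X j * X b) * q by ring,
    show m + 1 = 2 + (m - 1) by have := k.pos; omega, pow_add, sq]
  exact Ideal.mul_mem_mul (Ideal.mul_mem_mul
    (X_mul_X_mem_edgeIdealW (K := K) hia (htriv i a hia hiN haN))
    (X_mul_X_mem_edgeIdealW hjb (htriv j b hjb hjN hbN))) hq

theorem colon_le_edgeIdealW_completion (hes : ∀ k, G.Adj (es k).1 (es k).2)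
    (hUV : U ∪ V' = closedNbhd G es) (hB : (inducedOnClosedNbhd G es).IsBipartiteWith U V')
    (htriv : ∀ i j, G.Adj i j → i ∈ closedNbhd G es → j ∈ closedNbhd G es → w i j = 1) :
    (edgeIdealW (K := K) G w ^ (m + 1)).colon
        ((Ideal.span {∏ k, (X (es k).1 * X (es k).2)} : Ideal (MvPolynomial V K)) :
          Set (MvPolynomial V K)) ≤
      edgeIdealW (K := K) (G ⊔ SimpleGraph.fromRel (fun i j => i ∈ U ∧ j ∈ V'))
        (fun i j => if G.Adj i j then w i j else 1) := by
  intro f hf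
  rw [prod_X_mul_X_eq_monomial, edgeIdealW_eq_span_monomial, span_monomial_image_pow,
    mem_colon_span_monomial_iff] at hf
  rw [edgeIdealW_eq_span_monomial, mem_ideal_span_monomial_image]
  intro d hd
  obtain ⟨_, hs, hle⟩ := hf d hd
  obtain ⟨g, rfl⟩ := Set.mem_nsmul.1 hs
  rw [List.sum_ofFn] at hle
  exact exists_edgeExponents_completion_le hes hUV hB htriv (by simp) (fun k => (g k).2) hle

theorem edgeIdealW_completion_le_colon (hes : ∀ k, G.Adj (es k).1 (es k).2)
    (hconn : (edgesSubgraph G es hes).Connected) (hUV : U ∪ V' = closedNbhd G es)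
    (hB : (inducedOnClosedNbhd G es).IsBipartiteWith U V')
    (htriv : ∀ i j, G.Adj i j → i ∈ closedNbhd G es → j ∈ closedNbhd G es → w i j = 1) :
    edgeIdealW (K := K) (G ⊔ SimpleGraph.fromRel (fun i j => i ∈ U ∧ j ∈ V'))
        (fun i j => if G.Adj i j then w i j else 1) ≤
      (edgeIdealW (K := K) G w ^ (m + 1)).colon
        ((Ideal.span {∏ k, (X (es k).1 * X (es k).2)} : Ideal (MvPolynomial V K)) :
          Set (MvPolynomial V K)) := by
  rw [edgeIdealW, Ideal.span_le]
  rintro _ ⟨i, j, hij, rfl⟩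
  rw [SetLike.mem_coe, Ideal.mem_colon_span_singleton]
  by_cases hG : G.Adj i j
  · rw [if_pos hG, pow_succ']
    exact Ideal.mul_mem_mul (Ideal.subset_span ⟨i, j, hG, rfl⟩) (prod_X_mul_X_mem_pow hes htriv)
  rw [if_neg hG, pow_one]
  obtain ⟨-, ⟨hi, hj⟩ | ⟨hj, hi⟩⟩ := (SimpleGraph.fromRel_adj _ _ _).1 (hij.resolve_left hG)
  · exact X_mul_X_mul_prod_mem_pow hes hconn hUV hB htriv hi hj
  · rw [mul_comm (X i)]
    exact X_mul_X_mul_prod_mem_pow hes hconn hUV hB htriv hj hi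

end ClosedNbhd

theorem colon_product_edges_eq_bipartite_completion_general {V K : Type*} [Field K]
    (G : SimpleGraph V) (w : V → V → ℕ)
    (t : ℕ) (ht : 2 ≤ t)
    (es : Fin (t - 1) → V × V) (hes : ∀ k, G.Adj (es k).1 (es k).2)
    (hconn : (edgesSubgraph G es hes).Connected)
    (U V' : Set V) (hUV : U ∪ V' = closedNbhd G es) (hdisj : Disjoint U V')
    (hbip : ∀ i j, G.Adj i j → i ∈ closedNbhd G es → j ∈ closedNbhd G es →
      (i ∈ U ∧ j ∈ V') ∨ (i ∈ V' ∧ j ∈ U))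
    (htriv : ∀ i j, G.Adj i j → i ∈ closedNbhd G es → j ∈ closedNbhd G es → w i j = 1) :
    (edgeIdealW (K := K) G w ^ t).colon
        ((Ideal.span {∏ k : Fin (t - 1), (X (es k).1 * X (es k).2)} :
          Ideal (MvPolynomial V K)) : Set (MvPolynomial V K)) =
      edgeIdealW (K := K)
        (G ⊔ SimpleGraph.fromRel (fun i j => i ∈ U ∧ j ∈ V'))
        (fun i j => if G.Adj i j then w i j else 1) := by
  have hB : (inducedOnClosedNbhd G es).IsBipartiteWith U V' :=
    ⟨hdisj, fun i j ⟨hi, hj, hij⟩ => hbip i j hij hi hj⟩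
  rw [show edgeIdealW (K := K) G w ^ t = _ ^ (t - 1 + 1) by rw [Nat.sub_add_cancel (by omega)]]
  exact le_antisymm (colon_le_edgeIdealW_completion hes hUV hB htriv)
    (edgeIdealW_completion_le_colon hes hconn hUV hB htriv)

/-- Let `e = {e_1,…,e_{t-1}}` be a connected collection of edges of `G`
such that the induced subgraph on `N[e]` is bipartite with parts `U ∪ V'`, and assume the
weight function is trivial on all edges inside `N[e]`.  Then
`I(G_w)^t : (e_1 ⋯ e_{t-1}) = I(G̃_{w'})`, where `G̃` is the bipartite completion of `G`
with respect to `e` (adding all edges between `U` and `V'`) and `w'` extends `w` by weight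
`1` on the new edges. -/
theorem colon_product_edges_eq_bipartite_completion {V K : Type*} [Field K]
    (G : SimpleGraph V) (w : V → V → ℕ)
    (hsymm : ∀ i j, w i j = w j i) (hpos : ∀ i j, G.Adj i j → 0 < w i j)
    (t : ℕ) (ht : 2 ≤ t)
    (es : Fin (t - 1) → V × V) (hes : ∀ k, G.Adj (es k).1 (es k).2)
    (hconn : (edgesSubgraph G es hes).Connected)
    (U V' : Set V) (hUV : U ∪ V' = closedNbhd G es) (hdisj : Disjoint U V')
    (hbip : ∀ i j, G.Adj i j → i ∈ closedNbhd G es → j ∈ closedNbhd G es →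
      (i ∈ U ∧ j ∈ V') ∨ (i ∈ V' ∧ j ∈ U))
    (htriv : ∀ i j, G.Adj i j → i ∈ closedNbhd G es → j ∈ closedNbhd G es → w i j = 1) :
    (edgeIdealW (K := K) G w ^ t).colon
        ((Ideal.span {∏ k : Fin (t - 1), (X (es k).1 * X (es k).2)} :
          Ideal (MvPolynomial V K)) : Set (MvPolynomial V K)) =
      edgeIdealW (K := K)
        (G ⊔ SimpleGraph.fromRel (fun i j => i ∈ U ∧ j ∈ V'))
        (fun i j => if G.Adj i j then w i j else 1) :=
  colon_product_edges_eq_bipartite_completion_general G w t ht es hes hconn U V' hUV hdisj hbip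
    htriv
end

section
/- Let 3 ≤ a ≤ ⌊n/2⌋ - 1, γ, δ > 1, and I = (u_1,...,u_{a-1}, u_a^γ, u_{a+1}, u_{a+2}^δ, u_{a+3},...,u_{n-1}) with u_j = x_j x_{j+1}. Then I^2 : (u_2 u_{a+2}) = (x_{a+1}, (x_{a+2} x_{a+3})^{δ-1}, x_{a+4}) + (x_{2p+1} x_{2q} : 0 ≤ p ≤ 1, 1 ≤ q ≤ 2) + I. -/
open MvPolynomial Finset

/-- The variable `x_i` of `K[x_1,…,x_n]` (1-based indexing). -/
noncomputable def Xv (n : ℕ) (K : Type*) [Field K] (i : ℕ) : MvPolynomial (Fin n) K :=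
  if h : 1 ≤ i ∧ i ≤ n then X ⟨i - 1, by omega⟩ else 0

/-- `u_j = x_j x_{j+1}`. -/
noncomputable def pu (n : ℕ) (K : Type*) [Field K] (j : ℕ) : MvPolynomial (Fin n) K :=
  Xv n K j * Xv n K (j + 1)

/-- The edge ideal `I = (u_1,…,u_{a-1}, u_a^γ, u_{a+1}, u_{a+2}^δ, u_{a+3},…,u_{n-1})` of
the edge-weighted path with two non-trivial weights `γ, δ` at positions `a` and `a+2`. -/
noncomputable def pathIdeal2 (n : ℕ) (K : Type*) [Field K] (a γ δ : ℕ) :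
    Ideal (MvPolynomial (Fin n) K) :=
  Ideal.span {p | ∃ j, 1 ≤ j ∧ j ≤ n - 1 ∧
    p = pu n K j ^ (if j = a then γ else if j = a + 2 then δ else 1)}

/-!
All ideals involved are monomial ideals. The colon of a monomial ideal by a monomial `x^d` is
generated by the `x^(s - d)` (truncated subtraction), so both sides are spanned by monomials and
it suffices to compare generators: every `(e_i + e_j) - d`, for `e_i, e_j` exponents of generators
of `I` and `d` that of `u_2 u_{a+2}`, is divisible by one of the listed generators, and every
listed generator is divisible by some `(e_i + e_j) - d`. A single edge other than `u_1`, `u_2`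
(and `u_3` unless `3 = a`) already accounts for a generator; the remaining edges are treated in
pairs.
-/

open Pointwise

namespace MvPolynomial

variable {σ R : Type*} [CommSemiring R]

theorem span_monomial_image_le_span_monomial_image {A B : Set (σ →₀ ℕ)}
    (h : ∀ a ∈ A, ∃ b ∈ B, b ≤ a) :
    Ideal.span ((fun s => monomial s (1 : R)) '' A) ≤
      Ideal.span ((fun s => monomial s (1 : R)) '' B) := by
  refine Ideal.span_le.mpr ?_
  rintro _ ⟨a, ha, rfl⟩
  refine mem_ideal_span_monomial_image.mpr fun x hx => ?_
  rw [Finset.mem_singleton.mp (support_monomial_subset hx)]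
  exact h a ha

theorem span_monomial_image_pow_two (A : Set (σ →₀ ℕ)) :
    Ideal.span ((fun s => monomial s (1 : R)) '' A) ^ 2 =
      Ideal.span ((fun s => monomial s (1 : R)) '' (A + A)) := by
  rw [sq, Ideal.span_mul_span', ← Set.image2_add, ← Set.image2_mul, Set.image_image2,
    Set.image2_image_left, Set.image2_image_right]
  simp only [monomial_mul, one_mul]

theorem colon_span_monomial_image (A : Set (σ →₀ ℕ)) (d : σ →₀ ℕ) :
    (Ideal.span ((fun s => monomial s (1 : R)) '' A)).colon (Ideal.span {monomial d (1 : R)}) =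
      Ideal.span ((fun s => monomial s (1 : R)) '' ((· - d) '' A)) := by
  ext f
  simp only [Ideal.mem_colon_span_singleton, mem_ideal_span_monomial_image,
    Set.exists_mem_image, tsub_le_iff_right, mem_support_iff, coeff_mul_monomial']
  constructor
  · intro h μ hμ
    simpa [hμ] using h (μ + d)
  · intro h ν hν
    split_ifs at hν with hd
    · obtain ⟨a, ha, hle⟩ := h _ (by simpa using hν)
      exact ⟨a, ha, by rwa [tsub_add_cancel_of_le hd] at hle⟩
    · exact absurd rfl hν

end MvPolynomial

/- Exponents are first handled as profiles `ℕ → ℕ` along the path, indexed by the vertices: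
`varExp p` is the exponent of `x_p` and `edgeExp j` that of `u_j = x_j x_{j+1}`. -/

def varExp (p : ℕ) : ℕ → ℕ := Pi.single p 1

def edgeExp (j : ℕ) : ℕ → ℕ := varExp j + varExp (j + 1)

def edgeWeight (a γ δ j : ℕ) : ℕ := if j = a then γ else if j = a + 2 then δ else 1

def edgeSet (n a γ δ : ℕ) : Set (ℕ → ℕ) :=
  {s | ∃ j, 1 ≤ j ∧ j ≤ n - 1 ∧ s = edgeWeight a γ δ j • edgeExp j}

def colonGenerators (n a γ δ : ℕ) : Set (ℕ → ℕ) :=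
  {varExp (a + 1), (δ - 1) • edgeExp (a + 2), varExp (a + 4)} ∪
    {s | ∃ i j : ℕ, i ≤ 1 ∧ 1 ≤ j ∧ j ≤ 2 ∧ s = varExp (2 * i + 1) + varExp (2 * j)} ∪
    edgeSet n a γ δ

theorem varExp_apply (p k : ℕ) : varExp p k = if k = p then 1 else 0 := by
  simp [varExp, Pi.single_apply]

theorem edgeWeight_of_ne {a γ δ j : ℕ} (h₁ : j ≠ a) (h₂ : j ≠ a + 2) :
    edgeWeight a γ δ j = 1 := by
  simp [edgeWeight, h₁, h₂]

theorem edgeWeight_self (a γ δ : ℕ) : edgeWeight a γ δ a = γ := by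
  simp [edgeWeight]

theorem edgeWeight_add_two (a γ δ : ℕ) : edgeWeight a γ δ (a + 2) = δ := by
  simp [edgeWeight]

theorem edge_mem_edgeSet {n a γ δ j : ℕ} (h₁ : 1 ≤ j) (h₂ : j ≤ n - 1) :
    edgeWeight a γ δ j • edgeExp j ∈ edgeSet n a γ δ :=
  ⟨j, h₁, h₂, rfl⟩

theorem pair_mem_colonGenerators {n a γ δ p q : ℕ} (hp : p ≤ 1) (hq₁ : 1 ≤ q) (hq₂ : q ≤ 2) :
    varExp (2 * p + 1) + varExp (2 * q) ∈ colonGenerators n a γ δ :=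
  Or.inl (Or.inr ⟨p, q, hp, hq₁, hq₂, rfl⟩)

theorem add_mem_edgeSet_add {n a γ δ i j : ℕ} (hi₁ : 1 ≤ i) (hi₂ : i ≤ n - 1) (hj₁ : 1 ≤ j)
    (hj₂ : j ≤ n - 1) :
    edgeWeight a γ δ i • edgeExp i + edgeWeight a γ δ j • edgeExp j ∈
      edgeSet n a γ δ + edgeSet n a γ δ :=
  Set.add_mem_add (edge_mem_edgeSet hi₁ hi₂) (edge_mem_edgeSet hj₁ hj₂)

theorem exists_sub_le_varExp_add_varExp {n a γ δ p q : ℕ} (ha : 3 ≤ a) (hn : 2 * a + 2 ≤ n)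
    (hp : p ≤ 1) (hq₁ : 1 ≤ q) (hq₂ : q ≤ 2) :
    ∃ s ∈ edgeSet n a γ δ + edgeSet n a γ δ,
      s - (edgeExp 2 + edgeExp (a + 2)) ≤ varExp (2 * p + 1) + varExp (2 * q) := by
  -- `x_{2p+1}` is taken from `u_{p+1}` and `x_{2q}` from `u_{q+1}`, except that for `a = 3`
  -- the weighted edge `u_3` is avoided and `x_4` is taken from `u_4`
  obtain rfl | ha' := eq_or_ne a 3
  · refine ⟨_, add_mem_edgeSet_add (i := p + 1) (j := 2 * q) (by omega) (by omega) (by omega)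
      (by omega), fun k => ?_⟩
    interval_cases p <;> interval_cases q <;>
      simp (disch := omega) only [edgeWeight_of_ne, one_smul, edgeExp, varExp_apply,
        Pi.add_apply, Pi.sub_apply] <;> split_ifs <;> omega
  · refine ⟨_, add_mem_edgeSet_add (i := p + 1) (j := q + 1) (by omega) (by omega) (by omega)
      (by omega), fun k => ?_⟩
    interval_cases p <;> interval_cases q <;>
      simp (disch := omega) only [edgeWeight_of_ne, one_smul, edgeExp, varExp_apply,
        Pi.add_apply, Pi.sub_apply] <;> split_ifs <;> omega

theorem exists_sub_le_of_mem_colonGenerators {n a γ δ : ℕ} (ha : 3 ≤ a) (hn : 2 * a + 2 ≤ n)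
    {g : ℕ → ℕ} (hg : g ∈ colonGenerators n a γ δ) :
    ∃ s ∈ edgeSet n a γ δ + edgeSet n a γ δ, s - (edgeExp 2 + edgeExp (a + 2)) ≤ g := by
  have hw₂ : edgeWeight a γ δ 2 = 1 := edgeWeight_of_ne (by omega) (by omega)
  rcases hg with (hg | ⟨p, q, hp, hq₁, hq₂, rfl⟩) | ⟨m, hm₁, hm₂, rfl⟩
  · rcases hg with rfl | rfl | rfl
    · refine ⟨_, add_mem_edgeSet_add (i := 2) (j := a + 1) (by omega) (by omega) (by omega)
        (by omega), fun k => ?_⟩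
      simp (disch := omega) only [edgeWeight_of_ne, one_smul, edgeExp, varExp_apply,
        Pi.add_apply, Pi.sub_apply]
      split_ifs <;> omega
    · refine ⟨_, add_mem_edgeSet_add (i := 2) (j := a + 2) (by omega) (by omega) (by omega)
        (by omega), fun k => ?_⟩
      simp only [hw₂, edgeWeight_add_two, one_smul, edgeExp, varExp_apply, Pi.add_apply,
        Pi.sub_apply, Pi.smul_apply, smul_eq_mul]
      split_ifs <;> omega
    · refine ⟨_, add_mem_edgeSet_add (i := 2) (j := a + 3) (by omega) (by omega) (by omega)
        (by omega), fun k => ?_⟩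
      simp (disch := omega) only [edgeWeight_of_ne, one_smul, edgeExp, varExp_apply,
        Pi.add_apply, Pi.sub_apply]
      split_ifs <;> omega
  · exact exists_sub_le_varExp_add_varExp ha hn hp hq₁ hq₂
  · refine ⟨_, add_mem_edgeSet_add (i := 2) (by omega) (by omega) hm₁ hm₂, ?_⟩
    rw [hw₂, one_smul, add_tsub_add_eq_tsub_left]
    exact tsub_le_self

theorem exists_mem_colonGenerators_le_edge_sub {n a γ δ i : ℕ} (ha : 3 ≤ a)
    (hγ : 1 < γ) (hi₁ : 1 ≤ i) (hi₂ : i ≤ n - 1)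
    (hi : i ≠ 1 ∧ i ≠ 2 ∧ (i = 3 → a = 3)) :
    ∃ g ∈ colonGenerators n a γ δ,
      g ≤ edgeWeight a γ δ i • edgeExp i - (edgeExp 2 + edgeExp (a + 2)) := by
  obtain ⟨hi_ne_one, hi_ne_two, hi_three⟩ := hi
  obtain rfl | h₁ := eq_or_ne i (a + 1)
  · refine ⟨_, Or.inl (Or.inl (Set.mem_insert _ _)), fun k => ?_⟩
    simp (disch := omega) only [edgeWeight_of_ne, one_smul, edgeExp, varExp_apply,
      Pi.add_apply, Pi.sub_apply]
    split_ifs <;> omega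
  obtain rfl | h₂ := eq_or_ne i (a + 2)
  · refine ⟨_, Or.inl (Or.inl (Set.mem_insert_of_mem _ (Set.mem_insert _ _))), fun k => ?_⟩
    simp only [edgeWeight_add_two, edgeExp, varExp_apply, Pi.add_apply, Pi.sub_apply,
      Pi.smul_apply, smul_eq_mul]
    split_ifs <;> omega
  obtain rfl | h₃ := eq_or_ne i (a + 3)
  · refine ⟨_, Or.inl (Or.inl (Set.mem_insert_of_mem _ (Set.mem_insert_of_mem _ rfl))),
      fun k => ?_⟩
    simp (disch := omega) only [edgeWeight_of_ne, one_smul, edgeExp, varExp_apply,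
      Pi.add_apply, Pi.sub_apply]
    split_ifs <;> omega
  obtain rfl | h₄ := eq_or_ne i 3
  · obtain rfl := hi_three rfl
    refine ⟨_, pair_mem_colonGenerators (p := 1) (q := 2) le_rfl one_le_two le_rfl,
      fun k => ?_⟩
    simp only [edgeWeight_self, edgeExp, varExp_apply, Pi.add_apply, Pi.sub_apply,
      Pi.smul_apply, smul_eq_mul]
    split_ifs <;> omega
  -- `u_i` is disjoint from `u_2 u_{a+2}`
  refine ⟨_, Or.inr (edge_mem_edgeSet hi₁ hi₂), fun k => ?_⟩
  simp only [edgeExp, varExp_apply, Pi.add_apply, Pi.sub_apply, Pi.smul_apply, smul_eq_mul]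
  split_ifs <;> omega

theorem exists_mem_colonGenerators_le_sub {n a γ δ : ℕ} (ha : 3 ≤ a) (hγ : 1 < γ)
    {s : ℕ → ℕ} (hs : s ∈ edgeSet n a γ δ + edgeSet n a γ δ) :
    ∃ g ∈ colonGenerators n a γ δ, g ≤ s - (edgeExp 2 + edgeExp (a + 2)) := by
  obtain ⟨_, ⟨i, hi₁, hi₂, rfl⟩, _, ⟨j, hj₁, hj₂, rfl⟩, rfl⟩ := hs
  dsimp only
  wlog hij : i ≤ j generalizing i j
  · rw [add_comm (edgeWeight a γ δ i • edgeExp i)]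
    exact this j hj₁ hj₂ i hi₁ hi₂ (by omega)
  by_cases hj : j ≠ 1 ∧ j ≠ 2 ∧ (j = 3 → a = 3)
  · obtain ⟨g, hg, hle⟩ := exists_mem_colonGenerators_le_edge_sub ha hγ hj₁ hj₂ hj
    exact ⟨g, hg, hle.trans (tsub_le_tsub_right le_add_self _)⟩
  have hw : ∀ {k}, k ≤ 3 → 1 ≤ k → (k = 3 → a ≠ 3) → edgeWeight a γ δ k = 1 :=
    fun h₁ h₂ h₃ => edgeWeight_of_ne (by omega) (by omega)
  rw [hw (by omega) hi₁ (by omega), hw (by omega) hj₁ (by omega), one_smul, one_smul]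
  obtain ⟨p, q, hp, hq₁, hq₂, hpq⟩ : ∃ p q, p ≤ 1 ∧ 1 ≤ q ∧ q ≤ 2 ∧
      varExp (2 * p + 1) + varExp (2 * q) ≤
        edgeExp i + edgeExp j - (edgeExp 2 + edgeExp (a + 2)) := by
    -- the odd endpoint of `u_i` and the even endpoint of `u_j`
    refine ⟨i / 2, (j + 1) / 2, by omega, by omega, by omega, fun k => ?_⟩
    have hj3 : j ≤ 3 := by omega
    interval_cases j <;> interval_cases i <;>
      simp only [edgeExp, varExp_apply, Pi.add_apply, Pi.sub_apply] <;> split_ifs <;> omega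
  exact ⟨_, pair_mem_colonGenerators hp hq₁ hq₂, hpq⟩

/-- Exponent vector on `Fin n` of a profile indexed by the path vertices `1, …, n`. -/
noncomputable def expOf (n : ℕ) : (ℕ → ℕ) →+ (Fin n →₀ ℕ) where
  toFun P := Finsupp.equivFunOnFinite.symm fun t => P (t + 1)
  map_zero' := by ext; simp
  map_add' P Q := by ext; simp

@[simp]
theorem expOf_apply (n : ℕ) (P : ℕ → ℕ) (t : Fin n) : expOf n P t = P (t + 1) := rfl

theorem expOf_sub (n : ℕ) (P Q : ℕ → ℕ) : expOf n (P - Q) = expOf n P - expOf n Q := by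
  ext; simp

theorem expOf_mono (n : ℕ) {P Q : ℕ → ℕ} (h : P ≤ Q) : expOf n P ≤ expOf n Q :=
  fun t => h (t + 1)

theorem image_sub_expOf_image (n : ℕ) (D : ℕ → ℕ) (A : Set (ℕ → ℕ)) :
    (· - expOf n D) '' (expOf n '' A) = expOf n '' ((· - D) '' A) := by
  simp only [Set.image_image, expOf_sub]

theorem span_monomial_expOf_image_le (n : ℕ) (K : Type*) [Field K] {A B : Set (ℕ → ℕ)}
    (h : ∀ P ∈ A, ∃ Q ∈ B, Q ≤ P) :
    Ideal.span ((fun s => monomial s (1 : K)) '' (expOf n '' A)) ≤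
      Ideal.span ((fun s => monomial s (1 : K)) '' (expOf n '' B)) := by
  refine span_monomial_image_le_span_monomial_image ?_
  rintro _ ⟨P, hP, rfl⟩
  obtain ⟨Q, hQ, hle⟩ := h P hP
  exact ⟨_, ⟨Q, hQ, rfl⟩, expOf_mono n hle⟩

theorem Xv_eq_monomial (n : ℕ) (K : Type*) [Field K] {i : ℕ} (h₁ : 1 ≤ i) (h₂ : i ≤ n) :
    Xv n K i = monomial (expOf n (varExp i)) 1 := by
  rw [Xv, dif_pos ⟨h₁, h₂⟩, X]
  refine congrArg (monomial · 1) (Finsupp.ext fun t => ?_)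
  simp only [Finsupp.single_apply, expOf_apply, varExp_apply, Fin.ext_iff]
  split_ifs <;> omega

theorem Xv_mul_Xv (n : ℕ) (K : Type*) [Field K] {i j : ℕ} (hi₁ : 1 ≤ i) (hi₂ : i ≤ n)
    (hj₁ : 1 ≤ j) (hj₂ : j ≤ n) :
    Xv n K i * Xv n K j = monomial (expOf n (varExp i + varExp j)) 1 := by
  rw [Xv_eq_monomial n K hi₁ hi₂, Xv_eq_monomial n K hj₁ hj₂, monomial_mul, one_mul, map_add]

theorem pu_pow (n : ℕ) (K : Type*) [Field K] {j : ℕ} (h₁ : 1 ≤ j) (h₂ : j + 1 ≤ n) (w : ℕ) :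
    pu n K j ^ w = monomial (expOf n (w • edgeExp j)) 1 := by
  rw [pu, Xv_mul_Xv n K h₁ (by omega) (by omega) h₂, monomial_pow, one_pow, map_nsmul, edgeExp]

theorem pathIdeal2_eq_span_monomial (n : ℕ) (K : Type*) [Field K] (a γ δ : ℕ) :
    pathIdeal2 n K a γ δ =
      Ideal.span ((fun s => monomial s (1 : K)) '' (expOf n '' edgeSet n a γ δ)) := by
  rw [pathIdeal2, Set.image_image]
  congr 1
  ext p
  simp only [edgeSet, Set.mem_ofPred_eq, Set.mem_image]
  constructor
  · rintro ⟨j, hj₁, hj₂, rfl⟩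
    exact ⟨_, ⟨j, hj₁, hj₂, rfl⟩, (pu_pow n K hj₁ (by omega) _).symm⟩
  · rintro ⟨_, ⟨j, hj₁, hj₂, rfl⟩, rfl⟩
    exact ⟨j, hj₁, hj₂, (pu_pow n K hj₁ (by omega) _).symm⟩

theorem sup_eq_span_monomial_colonGenerators (n : ℕ) (K : Type*) [Field K] {a : ℕ} (γ δ : ℕ)
    (hn : a + 4 ≤ n) :
    Ideal.span {Xv n K (a + 1), (Xv n K (a + 2) * Xv n K (a + 3)) ^ (δ - 1), Xv n K (a + 4)} ⊔
        Ideal.span {q | ∃ i j : ℕ, i ≤ 1 ∧ 1 ≤ j ∧ j ≤ 2 ∧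
          q = Xv n K (2 * i + 1) * Xv n K (2 * j)} ⊔
        pathIdeal2 n K a γ δ =
      Ideal.span ((fun s => monomial s (1 : K)) '' (expOf n '' colonGenerators n a γ δ)) := by
  rw [pathIdeal2_eq_span_monomial, colonGenerators, Set.image_union, Set.image_union,
    Set.image_union, Set.image_union, Ideal.span_union, Ideal.span_union]
  congr 3
  · rw [show Xv n K (a + 2) * Xv n K (a + 3) = pu n K (a + 2) from rfl,
      pu_pow n K (by omega) (by omega), Xv_eq_monomial n K (by omega) (by omega),
      Xv_eq_monomial n K (by omega) hn]
    simp only [Set.image_insert_eq, Set.image_singleton]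
  · ext q
    simp only [Set.mem_ofPred_eq, Set.mem_image]
    constructor
    · rintro ⟨i, j, hi, hj₁, hj₂, rfl⟩
      exact ⟨_, ⟨_, ⟨i, j, hi, hj₁, hj₂, rfl⟩, rfl⟩,
        (Xv_mul_Xv n K (by omega) (by omega) (by omega) (by omega)).symm⟩
    · rintro ⟨_, ⟨_, ⟨i, j, hi, hj₁, hj₂, rfl⟩, rfl⟩, rfl⟩
      exact ⟨i, j, hi, hj₁, hj₂, (Xv_mul_Xv n K (by omega) (by omega) (by omega) (by omega)).symm⟩

theorem colon_square_two_weights_general (n : ℕ) (K : Type*) [Field K] (a γ δ : ℕ)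
    (ha1 : 3 ≤ a) (ha2 : a ≤ n / 2 - 1) (hγ : 1 < γ) :
    (pathIdeal2 n K a γ δ ^ 2).colon (Ideal.span {pu n K 2 * pu n K (a + 2)}) =
      Ideal.span {Xv n K (a + 1), (Xv n K (a + 2) * Xv n K (a + 3)) ^ (δ - 1),
          Xv n K (a + 4)} ⊔
        Ideal.span {q | ∃ i j : ℕ, i ≤ 1 ∧ 1 ≤ j ∧ j ≤ 2 ∧
          q = Xv n K (2 * i + 1) * Xv n K (2 * j)} ⊔
        pathIdeal2 n K a γ δ := by
  have hn : 2 * a + 2 ≤ n := by omega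
  have hd : pu n K 2 * pu n K (a + 2) = monomial (expOf n (edgeExp 2 + edgeExp (a + 2))) 1 := by
    rw [← pow_one (pu n K 2), ← pow_one (pu n K (a + 2)), pu_pow n K (by omega) (by omega),
      pu_pow n K (by omega) (by omega), monomial_mul, one_mul, one_smul, one_smul, map_add]
  rw [sup_eq_span_monomial_colonGenerators n K γ δ (by omega), pathIdeal2_eq_span_monomial,
    span_monomial_image_pow_two, hd, colon_span_monomial_image, ← Set.image_add,
    image_sub_expOf_image]
  refine le_antisymm (span_monomial_expOf_image_le n K ?_) (span_monomial_expOf_image_le n K ?_)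
  · rintro _ ⟨s, hs, rfl⟩
    exact exists_mem_colonGenerators_le_sub ha1 hγ hs
  · intro g hg
    obtain ⟨s, hs, hle⟩ := exists_sub_le_of_mem_colonGenerators ha1 hn hg
    exact ⟨_, ⟨s, hs, rfl⟩, hle⟩

/-- For `3 ≤ a ≤ ⌊n/2⌋ - 1` and `γ, δ > 1`,
`I² : (u_2 u_{a+2}) = (x_{a+1}, (x_{a+2}x_{a+3})^{δ-1}, x_{a+4})
+ (x_{2p+1} x_{2q} : 0 ≤ p ≤ 1, 1 ≤ q ≤ 2) + I`. -/
theorem colon_square_two_weights (n : ℕ) (K : Type*) [Field K] (a γ δ : ℕ)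
    (ha1 : 3 ≤ a) (ha2 : a ≤ n / 2 - 1) (hγ : 1 < γ) (hδ : 1 < δ) :
    (pathIdeal2 n K a γ δ ^ 2).colon (Ideal.span {pu n K 2 * pu n K (a + 2)}) =
      Ideal.span {Xv n K (a + 1), (Xv n K (a + 2) * Xv n K (a + 3)) ^ (δ - 1),
          Xv n K (a + 4)} ⊔
        Ideal.span {q | ∃ i j : ℕ, i ≤ 1 ∧ 1 ≤ j ∧ j ≤ 2 ∧
          q = Xv n K (2 * i + 1) * Xv n K (2 * j)} ⊔
        pathIdeal2 n K a γ δ :=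
  colon_square_two_weights_general n K a γ δ ha1 ha2 hγ
end
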